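/- Let γ₀ > 0 and f, g as in the normal form system f' = 2γ₀g²f, g' = -2γ₀fg² with f(0), g(0) > 0. Then f is strictly increasing, g is strictly decreasing, f(t) → f(0) + g(0) and g(t) → 0 as t → ∞. -/

import Mathlib

/-!
Both components stay positive, since each solves a linear equation `x' = c(t) x` with continuous
coefficient, so the signs of the derivatives give the monotonicity. The total mass `f + g` is
conserved. Finally `(1 / g)' = 2 γ₀ f ≥ 2 γ₀ f(0) > 0`, so `1 / g → ∞`, i.e. `g → 0`, and then
`f = f(0) + g(0) - g → f(0) + g(0)`.
-/

open Set Filter Topology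

section DerivOnIci

variable {a : ℝ} {x x' : ℝ → ℝ}

theorem continuousOn_Ici_of_hasDerivAt (hx : ∀ t ≥ a, HasDerivAt x (x' t) t) :
    ContinuousOn x (Ici a) :=
  fun t ht => (hx t ht).continuousAt.continuousWithinAt

theorem strictMonoOn_Ici_of_hasDerivAt_pos (hx : ∀ t ≥ a, HasDerivAt x (x' t) t)
    (hpos : ∀ t > a, 0 < x' t) : StrictMonoOn x (Ici a) :=
  strictMonoOn_of_hasDerivWithinAt_pos (convex_Ici a) (continuousOn_Ici_of_hasDerivAt hx)
    (fun t ht => by rw [interior_Ici] at ht ⊢; exact (hx t (ht.le)).hasDerivWithinAt)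
    (fun t ht => by rw [interior_Ici] at ht; exact hpos t ht)

theorem strictAntiOn_Ici_of_hasDerivAt_neg (hx : ∀ t ≥ a, HasDerivAt x (x' t) t)
    (hneg : ∀ t > a, x' t < 0) : StrictAntiOn x (Ici a) :=
  strictAntiOn_of_hasDerivWithinAt_neg (convex_Ici a) (continuousOn_Ici_of_hasDerivAt hx)
    (fun t ht => by rw [interior_Ici] at ht ⊢; exact (hx t (ht.le)).hasDerivWithinAt)
    (fun t ht => by rw [interior_Ici] at ht; exact hneg t ht)

theorem eq_of_hasDerivAt_zero_Ici (hx : ∀ t ≥ a, HasDerivAt x 0 t) :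
    ∀ t ≥ a, x t = x a := fun t ht =>
  constant_of_has_deriv_right_zero ((continuousOn_Ici_of_hasDerivAt hx).mono Icc_subset_Ici_self)
    (fun s hs => (hx s hs.1).hasDerivWithinAt) t ⟨ht, le_rfl⟩

theorem tendsto_atTop_of_le_hasDerivAt {C : ℝ} (hC : 0 < C)
    (hx : ∀ t ≥ a, HasDerivAt x (x' t) t) (hx' : ∀ t > a, C ≤ x' t) :
    Tendsto x atTop atTop := by
  have hgrowth : ∀ t ≥ a, x a + C * (t - a) ≤ x t := fun t ht => by
    have := (convex_Ici a).mul_sub_le_image_sub_of_le_deriv (continuousOn_Ici_of_hasDerivAt hx)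
      (fun s hs => by
        rw [interior_Ici] at hs
        exact (hx s (hs.le)).differentiableAt.differentiableWithinAt)
      (fun s hs => by
        rw [interior_Ici] at hs
        rw [(hx s (hs.le)).deriv]; exact hx' s hs)
      a self_mem_Ici t ht ht
    linarith
  refine tendsto_atTop_mono' atTop (eventually_ge_atTop a |>.mono hgrowth) ?_
  exact tendsto_atTop_add_const_left _ _
    ((tendsto_atTop_add_const_right _ (-a) tendsto_id).const_mul_atTop hC)

end DerivOnIci

section LinearODE

variable {c x : ℝ → ℝ}

-- Grönwall uniqueness, applied to the time-reversed solution `s ↦ x (-s)`.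
theorem eq_zero_left_of_hasDerivAt_eq_mul_self {a b : ℝ} (hab : a ≤ b)
    (hc : ContinuousOn c (Icc a b)) (hx : ∀ t ∈ Icc a b, HasDerivAt x (c t * x t) t)
    (hb : x b = 0) : x a = 0 := by
  obtain ⟨K, hK⟩ := isCompact_Icc.exists_bound_of_continuousOn hc
  have hmem : ∀ s ∈ Icc (-b) (-a), -s ∈ Icc a b := fun s hs =>
    ⟨by linarith [hs.2], by linarith [hs.1]⟩
  have hrev : ∀ s ∈ Icc (-b) (-a), HasDerivAt (fun s => x (-s)) (-(c (-s) * x (-s))) s :=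
    fun s hs => by
      simpa [Function.comp_def] using (hx (-s) (hmem s hs)).comp s (hasDerivAt_neg s)
  have := eq_zero_of_abs_deriv_le_mul_abs_self_of_eq_zero_right (K := K)
    (fun s hs => (hrev s hs).continuousAt.continuousWithinAt)
    (fun s hs => (hrev s (Ico_subset_Icc_self hs)).hasDerivWithinAt) (by simpa using hb)
    (fun s hs => by
      rw [norm_neg, norm_mul]
      exact mul_le_mul_of_nonneg_right (hK _ (hmem s (Ico_subset_Icc_self hs))) (norm_nonneg _))
    (-a) ⟨neg_le_neg hab, le_rfl⟩
  simpa using this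

theorem pos_of_hasDerivAt_eq_mul_self {a : ℝ} (hc : ContinuousOn c (Ici a))
    (hx : ∀ t ≥ a, HasDerivAt x (c t * x t) t) (ha : 0 < x a) : ∀ t ≥ a, 0 < x t := by
  intro t ht
  by_contra! hneg
  obtain ⟨T, hT, hxT⟩ : ∃ T ∈ Icc a t, x T = 0 :=
    intermediate_value_Icc' ht
      (fun s hs => (hx s hs.1).continuousAt.continuousWithinAt) ⟨hneg, ha.le⟩
  have := eq_zero_left_of_hasDerivAt_eq_mul_self hT.1 (hc.mono Icc_subset_Ici_self)
    (fun s hs => hx s hs.1) hxT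
  exact ha.ne' this

end LinearODE

theorem stmt13 (γ₀ : ℝ) (hγ : 0 < γ₀) (f g : ℝ → ℝ)
    (hf0 : 0 < f 0) (hg0 : 0 < g 0)
    (hf : ∀ t ≥ (0:ℝ), HasDerivAt f (2 * γ₀ * (g t)^2 * f t) t)
    (hg : ∀ t ≥ (0:ℝ), HasDerivAt g (-(2 * γ₀) * f t * (g t)^2) t) :
    StrictMonoOn f (Set.Ici (0:ℝ)) ∧ StrictAntiOn g (Set.Ici (0:ℝ))
    ∧ Filter.Tendsto f Filter.atTop (nhds (f 0 + g 0))
    ∧ Filter.Tendsto g Filter.atTop (nhds 0) := by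
  have hfc := continuousOn_Ici_of_hasDerivAt hf
  have hgc := continuousOn_Ici_of_hasDerivAt hg
  have hf_pos : ∀ t ≥ 0, 0 < f t :=
    pos_of_hasDerivAt_eq_mul_self (continuousOn_const.mul (hgc.pow 2)) hf hf0
  have hg_pos : ∀ t ≥ 0, 0 < g t :=
    pos_of_hasDerivAt_eq_mul_self (c := fun t => -(2 * γ₀) * f t * g t)
      ((continuousOn_const.mul hfc).mul hgc)
      (fun t ht => by convert hg t ht using 1; ring) hg0
  have hf_mono : StrictMonoOn f (Ici 0) := strictMonoOn_Ici_of_hasDerivAt_pos hf fun t ht => by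
    have := hf_pos t ht.le
    have := hg_pos t ht.le
    positivity
  have hg_anti : StrictAntiOn g (Ici 0) := strictAntiOn_Ici_of_hasDerivAt_neg hg fun t ht => by
    have := hf_pos t ht.le
    have := hg_pos t ht.le
    have : 0 < 2 * γ₀ * f t * g t ^ 2 := by positivity
    linarith
  have hmass : ∀ t ≥ 0, f t + g t = f 0 + g 0 := eq_of_hasDerivAt_zero_Ici fun t ht =>
    ((hf t ht).add (hg t ht)).congr_deriv (by ring)
  have hg_inv : Tendsto g⁻¹ atTop atTop :=
    tendsto_atTop_of_le_hasDerivAt (a := 0) (by positivity : 0 < 2 * γ₀ * f 0)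
      (fun t ht => ((hg t ht).inv (hg_pos t ht).ne').congr_deriv
        (by field_simp [(hg_pos t ht).ne'] : _ = 2 * γ₀ * f t))
      (fun t ht => by gcongr; exact (hf_mono self_mem_Ici ht.le ht).le)
  have hg_lim : Tendsto g atTop (𝓝 0) := by simpa using hg_inv.inv_tendsto_atTop
  refine ⟨hf_mono, hg_anti, ?_, hg_lim⟩
  have hf_eq : (fun t => f 0 + g 0 - g t) =ᶠ[atTop] f := by
    filter_upwards [eventually_ge_atTop 0] with t ht
    linarith [hmass t ht]
  simpa using (tendsto_const_nhds.sub hg_lim).congr' hf_eq
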